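/- arXiv:1711.01050 — 2 statements merged into one kernel-verified Lean document; each statement's English description precedes it below -/
import Mathlib

section
/- (Optimal uniform reward, Eq. (8)) Under Assumption 1 and with μ > 0, t > 0, s > 0, the scalar D = 2μt·1ᵀK²1 + 2·1ᵀK1 is strictly positive, and the uniform reward r* = D^{-1}{ μ[s·1ᵀK1 − 2t(a − c·1)ᵀK²1] − 1ᵀK(a − c·1) } is the unique global maximizer over r ∈ ℝ of the uniform-reward revenue Π_u(r) = μ(s·1ᵀx − t·xᵀx) − r·1ᵀx, where x = K(a + (r − c)·1). -/
/-!
Since `K = (B - G)⁻¹` is symmetric, with `u = K(a - c·1)` and `v = K1` the equilibrium is affine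
in the reward, `x(r) = u + r v`, and `1ᵀK²1 = vᵀv`, `(a - c·1)ᵀK²1 = uᵀv`. The revenue is therefore
a quadratic in `r` with leading coefficient `-(μt vᵀv + 1ᵀv) = -D/2`. Nonnegative symmetric
`G` with row sums below `2bᵢ` makes `B - G`, hence `K`, positive definite, so `1ᵀv = 1ᵀK1 > 0`
and `D > 0`; completing the square gives `Π(r*) - Π(r) = (D/2)(r - r*)²`.
-/

open Matrix

section

variable {ι : Type*} [Fintype ι]

theorem dotProduct_mulVec_le_sum_rowSum_mul_sq {G : Matrix ι ι ℝ} (hG : G.IsSymm)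
    (hG0 : ∀ i j, 0 ≤ G i j) (x : ι → ℝ) :
    x ⬝ᵥ (G *ᵥ x) ≤ ∑ i, (∑ j, G i j) * x i ^ 2 := by
  have hswap : ∑ i, ∑ j, G i j * x j ^ 2 = ∑ i, ∑ j, G i j * x i ^ 2 := by
    rw [Finset.sum_comm]
    simp_rw [hG.apply]
  calc x ⬝ᵥ (G *ᵥ x) = ∑ i, ∑ j, G i j * (x i * x j) := by
        simp only [dotProduct, mulVec, Finset.mul_sum]
        exact Finset.sum_congr rfl fun i _ => Finset.sum_congr rfl fun j _ => by ring
    _ ≤ ∑ i, ∑ j, G i j * ((x i ^ 2 + x j ^ 2) / 2) := by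
        gcongr with i _ j _
        · exact hG0 i j
        · nlinarith [sq_nonneg (x i - x j)]
    _ = ∑ i, (∑ j, G i j) * x i ^ 2 := by
        simp only [mul_add, add_div, Finset.sum_add_distrib, mul_div_assoc', hswap,
          ← Finset.sum_div, ← Finset.sum_mul]
        ring

theorem posDef_diagonal_sub_of_rowSum_lt [DecidableEq ι] {d : ι → ℝ} {G : Matrix ι ι ℝ}
    (hG : G.IsSymm) (hG0 : ∀ i j, 0 ≤ G i j) (hrow : ∀ i, ∑ j, G i j < d i) :
    (diagonal d - G).PosDef := by
  refine .of_dotProduct_mulVec_pos (isHermitian_iff_isSymm.mpr ((isSymm_diagonal d).sub hG))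
    fun x hx => ?_
  obtain ⟨i₀, hi₀ : x i₀ ≠ 0⟩ := Function.ne_iff.mp hx
  have hdiag : x ⬝ᵥ (diagonal d *ᵥ x) = ∑ i, d i * x i ^ 2 := by
    simp only [dotProduct, mulVec_diagonal]
    exact Finset.sum_congr rfl fun i _ => by ring
  have hlt : ∑ i, (∑ j, G i j) * x i ^ 2 < ∑ i, d i * x i ^ 2 :=
    Finset.sum_lt_sum (fun i _ => by gcongr; exact (hrow i).le)
      ⟨i₀, Finset.mem_univ _, mul_lt_mul_of_pos_right (hrow i₀) (by positivity)⟩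
  rw [star_trivial, sub_mulVec, dotProduct_sub, hdiag, sub_pos]
  exact (dotProduct_mulVec_le_sum_rowSum_mul_sq hG hG0 x).trans_lt hlt

theorem Matrix.IsSymm.dotProduct_mul_self_mulVec {R : Type*} [CommSemiring R]
    {K : Matrix ι ι R} (hK : K.IsSymm) (x y : ι → R) : x ⬝ᵥ ((K * K) *ᵥ y) = (K *ᵥ x) ⬝ᵥ (K *ᵥ y) := by
  have hvecMul : x ᵥ* K = K *ᵥ x := by rw [← vecMul_transpose, hK.eq]
  rw [← mulVec_mulVec, dotProduct_mulVec, hvecMul]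

def uniformRevenue (μ s t r : ℝ) (x : ι → ℝ) : ℝ :=
  μ * (s * ∑ i, x i - t * ∑ i, x i ^ 2) - r * ∑ i, x i

theorem uniformRevenue_add_smul (μ s t r : ℝ) (u v : ι → ℝ) :
    uniformRevenue μ s t r (u + r • v)
      = μ * (s * ∑ i, u i - t * (u ⬝ᵥ u))
        + (μ * (s * ∑ i, v i - 2 * t * (u ⬝ᵥ v)) - ∑ i, u i) * r
        - (μ * t * (v ⬝ᵥ v) + ∑ i, v i) * r ^ 2 := by
  have hsq : ∀ i, (u i + r * v i) ^ 2 = u i ^ 2 + 2 * r * (u i * v i) + r ^ 2 * v i ^ 2 :=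
    fun i => by ring
  simp only [uniformRevenue, dotProduct, Pi.add_apply, Pi.smul_apply, smul_eq_mul, hsq,
    Finset.sum_add_distrib, ← Finset.mul_sum, ← sq]
  ring

end

theorem concave_quadratic_max_unique {f : ℝ → ℝ} {α β D : ℝ} (hD : 0 < D)
    (hf : ∀ r, f r = α + β * r - D / 2 * r ^ 2) :
    (∀ r, f r ≤ f (β / D)) ∧ ∀ r, f r = f (β / D) → r = β / D := by
  have hgap : ∀ r, f (β / D) - f r = D / 2 * (r - β / D) ^ 2 := by
    intro r
    rw [hf, hf]
    field_simp
    ring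
  refine ⟨fun r => sub_nonneg.mp (hgap r ▸ by positivity), fun r hr => ?_⟩
  have h := hgap r
  rw [hr, sub_self, eq_comm, mul_eq_zero, pow_eq_zero_iff two_ne_zero, sub_eq_zero] at h
  exact h.resolve_left (by positivity)

theorem stmt9_general (N : ℕ) (hN : 1 ≤ N)
    (a b : Fin N → ℝ) (c : ℝ)
    (G : Matrix (Fin N) (Fin N) ℝ)
    (hGsym : ∀ i j, G i j = G j i)
    (hGnonneg : ∀ i j, 0 ≤ G i j)
    (hA : ∀ i, ∑ j, G i j < 2 * b i)
    (B : Matrix (Fin N) (Fin N) ℝ)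
    (hB : B = Matrix.diagonal (fun i => 2 * b i))
    (μ s t : ℝ) (hμ : 0 < μ) (ht : 0 < t)
    (K : Matrix (Fin N) (Fin N) ℝ) (hK : K = (B - G)⁻¹)
    (ones : Fin N → ℝ) (hones : ones = fun _ => 1)
    (D : ℝ)
    (hD : D = 2 * μ * t * (ones ⬝ᵥ ((K * K) *ᵥ ones)) + 2 * (ones ⬝ᵥ (K *ᵥ ones)))
    (rstar : ℝ)
    (hrstar : rstar = D⁻¹ * (μ * (s * (ones ⬝ᵥ (K *ᵥ ones))
        - 2 * t * ((fun i => a i - c) ⬝ᵥ ((K * K) *ᵥ ones)))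
        - ones ⬝ᵥ (K *ᵥ (fun i => a i - c))))
    (Revu : ℝ → ℝ)
    (hRevu : ∀ r : ℝ,
      Revu r = μ * (s * ∑ i, (K *ᵥ (fun j => a j + (r - c))) i
                  - t * ∑ i, ((K *ᵥ (fun j => a j + (r - c))) i) ^ 2)
              - r * ∑ i, (K *ᵥ (fun j => a j + (r - c))) i) :
    0 < D ∧ (∀ r : ℝ, Revu r ≤ Revu rstar) ∧
      (∀ r : ℝ, Revu r = Revu rstar → r = rstar) := by
  subst hB hones
  have hKpd : K.PosDef :=
    hK ▸ (posDef_diagonal_sub_of_rowSum_lt (.ext fun i j => hGsym j i) hGnonneg hA).inv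
  have hKsymm : K.IsSymm := isHermitian_iff_isSymm.mp hKpd.isHermitian
  have hones_dot : ∀ y : Fin N → ℝ, (fun _ => 1) ⬝ᵥ y = ∑ i, y i := one_dotProduct
  rw [hKsymm.dotProduct_mul_self_mulVec, hones_dot] at hD
  rw [hKsymm.dotProduct_mul_self_mulVec, hones_dot, hones_dot, ← div_eq_inv_mul] at hrstar
  have hsum_pos : 0 < ∑ i, (K *ᵥ fun _ => 1) i := by
    simpa [hones_dot] using hKpd.dotProduct_mulVec_pos (x := fun _ => 1)
      (Function.ne_iff.mpr ⟨⟨0, hN⟩, one_ne_zero⟩)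
  set u := K *ᵥ (fun i => a i - c)
  set v := K *ᵥ (fun _ => 1 : Fin N → ℝ)
  have hvv : 0 ≤ v ⬝ᵥ v := dotProduct_self_star_nonneg v
  have hDpos : 0 < D := hD ▸ by positivity
  have hx : ∀ r, K *ᵥ (fun j => a j + (r - c)) = u + r • v := fun r => by
    rw [← mulVec_smul, ← mulVec_add]
    congr 1
    ext j
    simp only [Pi.add_apply, Pi.smul_apply, smul_eq_mul, mul_one]
    ring
  obtain ⟨hmax, huniq⟩ := concave_quadratic_max_unique hDpos (f := Revu)
    (α := μ * (s * ∑ i, u i - t * (u ⬝ᵥ u)))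
    (β := μ * (s * ∑ i, v i - 2 * t * (u ⬝ᵥ v)) - ∑ i, u i) fun r => by
    rw [hRevu, hx, ← uniformRevenue, uniformRevenue_add_smul, hD]
    ring
  exact ⟨hDpos, hrstar ▸ hmax, hrstar ▸ huniq⟩

/-- Optimal uniform reward (Eq. (8)): `D = 2μt·1ᵀK²1 + 2·1ᵀK1 > 0` and
`r* = D⁻¹ { μ [s·1ᵀK1 − 2t (a − c·1)ᵀK²1] − 1ᵀK(a − c·1) }` is the unique global
maximizer of the uniform-reward revenue. -/
theorem stmt9 (N : ℕ) (hN : 1 ≤ N)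
    (a b : Fin N → ℝ) (c : ℝ) (hb : ∀ i, 0 < b i)
    (G : Matrix (Fin N) (Fin N) ℝ)
    (hGsym : ∀ i j, G i j = G j i)
    (hGnonneg : ∀ i j, 0 ≤ G i j)
    (hGdiag : ∀ i, G i i = 0)
    (hA : ∀ i, ∑ j, G i j < 2 * b i)
    (B : Matrix (Fin N) (Fin N) ℝ)
    (hB : B = Matrix.diagonal (fun i => 2 * b i))
    (μ s t : ℝ) (hμ : 0 < μ) (hs : 0 < s) (ht : 0 < t)
    (K : Matrix (Fin N) (Fin N) ℝ) (hK : K = (B - G)⁻¹)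
    (ones : Fin N → ℝ) (hones : ones = fun _ => 1)
    (D : ℝ)
    (hD : D = 2 * μ * t * (ones ⬝ᵥ ((K * K) *ᵥ ones)) + 2 * (ones ⬝ᵥ (K *ᵥ ones)))
    (rstar : ℝ)
    (hrstar : rstar = D⁻¹ * (μ * (s * (ones ⬝ᵥ (K *ᵥ ones))
        - 2 * t * ((fun i => a i - c) ⬝ᵥ ((K * K) *ᵥ ones)))
        - ones ⬝ᵥ (K *ᵥ (fun i => a i - c))))
    (Revu : ℝ → ℝ)
    (hRevu : ∀ r : ℝ,
      Revu r = μ * (s * ∑ i, (K *ᵥ (fun j => a j + (r - c))) i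
                  - t * ∑ i, ((K *ᵥ (fun j => a j + (r - c))) i) ^ 2)
              - r * ∑ i, (K *ᵥ (fun j => a j + (r - c))) i) :
    0 < D ∧ (∀ r : ℝ, Revu r ≤ Revu rstar) ∧
      (∀ r : ℝ, Revu r = Revu rstar → r = rstar) :=
  stmt9_general N hN a b c G hGsym hGnonneg hA B hB μ s t hμ ht K hK ones hones D hD rstar hrstar
    Revu hRevu
end

section
/- (Theorem 2, finite-expectation form) Let the diagonal parameters b be random with finitely many scenarios b^{(1)}, …, b^{(m)} (each b^{(k)}_i > 0) occurring with probabilities p_1, …, p_m ≥ 0 summing to 1, and suppose each scenario satisfies Assumption 1: Σ_{j=1}^N g_{ij} < 2b^{(k)}_i for all i, k. Let B^{(k)} be the diagonal matrix with entries 2b^{(k)}_i and B̄ = Σ_k p_k B^{(k)}. If c ≥ ā + μs, then the expected average optimal reward is bounded below as: Σ_k p_k [ (c − ā)/2 + μs/2 − (μt/N)(μs + ā − c)·1ᵀ(2(B^{(k)} − G) + 2μtI)^{-1}1 ] ≥ (c − ā)/2 + μs/2 − (μt/N)(μs + ā − c)·1ᵀ(2B̄ − 2G + 2μtI)^{-1}1.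 -/
/-!
For positive definite `A`, `v ⬝ᵥ A⁻¹ *ᵥ v = max_y (2 y ⬝ᵥ v - y ⬝ᵥ A *ᵥ y)` is a supremum of
functions affine in `A`, hence convex in `A`; Jensen's inequality for the scenario distribution
gives `E[1ᵀ M_k⁻¹ 1] ≥ 1ᵀ (E M_k)⁻¹ 1` with `M_k = 2(B_k - G) + 2μt I` and `E M_k = 2B̄ - 2G + 2μt I`.
When `c ≥ ā + μs` the coefficient `-(μt/N)(μs + ā - c)` of this term is nonnegative, which gives the
bound. Assumption 1 makes every `B_k - G` strictly diagonally dominant, hence positive definite by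
Gershgorin's theorem.
-/

open Matrix Finset

namespace Matrix

variable {n ι : Type*} [Fintype ι]

theorem posDef_sum_smul {A : ι → Matrix n n ℝ} (hA : ∀ k, (A k).PosDef) {p : ι → ℝ}
    (hp : ∀ k, 0 ≤ p k) (hps : ∑ k, p k = 1) : (∑ k, p k • A k).PosDef := by
  have hsupp : (univ.filter fun k => 0 < p k).Nonempty := by
    by_contra h
    have : ∑ k, p k = 0 := sum_eq_zero fun k _ =>
      le_antisymm (not_lt.mp fun hk => h ⟨k, mem_filter.mpr ⟨mem_univ k, hk⟩⟩) (hp k)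
    linarith
  rw [← sum_filter_of_ne fun k _ hk => (hp k).lt_of_ne' fun h0 => hk (by rw [h0, zero_smul])]
  exact posDef_sum hsupp fun k hk => (hA k).smul (mem_filter.mp hk).2

variable [Fintype n] [DecidableEq n]

theorem IsHermitian.posDef_of_sum_abs_lt_diag {A : Matrix n n ℝ} (hA : A.IsHermitian)
    (hdom : ∀ i, ∑ j ∈ univ.erase i, |A i j| < A i i) : A.PosDef := by
  refine hA.posDef_iff_eigenvalues_pos.mpr fun i => ?_
  have heig : Module.End.HasEigenvalue (toLin' A) (hA.eigenvalues i) := by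
    rw [Module.End.hasEigenvalue_iff_mem_spectrum, spectrum_toLin']
    exact hA.eigenvalues_mem_spectrum_real i
  obtain ⟨k, hk⟩ := eigenvalue_mem_ball heig
  rw [Metric.mem_closedBall, Real.dist_eq] at hk
  simp only [Real.norm_eq_abs] at hk
  linarith [neg_abs_le (hA.eigenvalues i - A k k), hdom k]

theorem posDef_diagonal_sub_of_sum_lt {G : Matrix n n ℝ} (hG : G.IsHermitian)
    (hG0 : ∀ i j, 0 ≤ G i j) {d : n → ℝ} (hd : ∀ i, ∑ j, G i j < d i) : (diagonal d - G).PosDef := by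
  refine ((isHermitian_diagonal d).sub hG).posDef_of_sum_abs_lt_diag fun i => ?_
  have hoff : ∀ j ∈ univ.erase i, |(diagonal d - G) i j| = G i j := fun j hj => by
    rw [sub_apply, diagonal_apply_ne _ (ne_of_mem_erase hj).symm, zero_sub, abs_neg,
      abs_of_nonneg (hG0 i j)]
  rw [sum_congr rfl hoff, sub_apply, diagonal_apply_eq]
  linarith [add_sum_erase univ (G i) (mem_univ i), hd i]

theorem PosDef.two_mul_dotProduct_sub_le {A : Matrix n n ℝ} (hA : A.PosDef) (v y : n → ℝ) :
    2 * (y ⬝ᵥ v) - y ⬝ᵥ (A *ᵥ y) ≤ v ⬝ᵥ (A⁻¹ *ᵥ v) := by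
  have hdet : IsUnit A.det := (isUnit_iff_isUnit_det A).mp hA.isUnit
  have hsymm : Aᵀ = A := hA.isHermitian
  set x := A⁻¹ *ᵥ v
  have hx : A *ᵥ x = v := by rw [mulVec_mulVec, mul_nonsing_inv _ hdet, one_mulVec]
  have hxy : x ⬝ᵥ (A *ᵥ y) = y ⬝ᵥ v := by
    rw [dotProduct_mulVec, ← mulVec_transpose, hsymm, hx, dotProduct_comm]
  -- `(x - y)ᵀ A (x - y) ≥ 0` expands to the claim, with equality at `y = x`
  have hnonneg := hA.posSemidef.dotProduct_mulVec_nonneg (x - y)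
  simp only [star_trivial, mulVec_sub, dotProduct_sub, sub_dotProduct, hx, hxy] at hnonneg
  rw [dotProduct_comm x v] at hnonneg
  linarith

theorem dotProduct_inv_mulVec_sum_smul_le {A : ι → Matrix n n ℝ} (hA : ∀ k, (A k).PosDef)
    {p : ι → ℝ} (hp : ∀ k, 0 ≤ p k) (hps : ∑ k, p k = 1) (v : n → ℝ) :
    v ⬝ᵥ ((∑ k, p k • A k)⁻¹ *ᵥ v) ≤ ∑ k, p k * (v ⬝ᵥ ((A k)⁻¹ *ᵥ v)) := by
  set Abar := ∑ k, p k • A k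
  have hdet : IsUnit Abar.det := (isUnit_iff_isUnit_det _).mp (posDef_sum_smul hA hp hps).isUnit
  set y := Abar⁻¹ *ᵥ v
  -- the variational bound is attained for `Abar` at `y`, and is affine in the matrix
  have hattained : v ⬝ᵥ y = 2 * (y ⬝ᵥ v) - y ⬝ᵥ (Abar *ᵥ y) := by
    rw [mulVec_mulVec, mul_nonsing_inv _ hdet, one_mulVec, dotProduct_comm v y]
    ring
  have haffine : 2 * (y ⬝ᵥ v) - y ⬝ᵥ (Abar *ᵥ y)
      = ∑ k, p k * (2 * (y ⬝ᵥ v) - y ⬝ᵥ (A k *ᵥ y)) := by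
    simp only [Abar, sum_mulVec, smul_mulVec, dotProduct_sum, dotProduct_smul, smul_eq_mul,
      mul_sub, sum_sub_distrib, ← sum_mul, hps, one_mul]
  rw [hattained, haffine]
  exact sum_le_sum fun k _ =>
    mul_le_mul_of_nonneg_left ((hA k).two_mul_dotProduct_sub_le v y) (hp k)

end Matrix

theorem stmt14_general (N m : ℕ)
    (abar c μ s t : ℝ) (hμ : 0 < μ) (ht : 0 < t)
    (G : Matrix (Fin N) (Fin N) ℝ)
    (hGsym : ∀ i j, G i j = G j i)
    (hGnonneg : ∀ i j, 0 ≤ G i j)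
    (b : Fin m → Fin N → ℝ)
    (hA : ∀ k i, ∑ j, G i j < 2 * b k i)
    (p : Fin m → ℝ) (hp : ∀ k, 0 ≤ p k) (hps : ∑ k, p k = 1)
    (B : Fin m → Matrix (Fin N) (Fin N) ℝ)
    (hB : ∀ k, B k = Matrix.diagonal (fun i => 2 * b k i))
    (Bbar : Matrix (Fin N) (Fin N) ℝ) (hBbar : Bbar = ∑ k, p k • B k)
    (ones : Fin N → ℝ)
    (hc : abar + μ * s ≤ c) :
    (∑ k, p k * ((c - abar) / 2 + μ * s / 2
        - (μ * t / (N : ℝ)) * (μ * s + abar - c) *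
          (ones ⬝ᵥ
            (((2 : ℝ) • (B k - G) + (2 * μ * t) • (1 : Matrix (Fin N) (Fin N) ℝ))⁻¹ *ᵥ ones))))
      ≥ (c - abar) / 2 + μ * s / 2
        - (μ * t / (N : ℝ)) * (μ * s + abar - c) *
          (ones ⬝ᵥ
            (((2 : ℝ) • Bbar - (2 : ℝ) • G + (2 * μ * t) • (1 : Matrix (Fin N) (Fin N) ℝ))⁻¹ *ᵥ ones)) := by
  set M : Fin m → Matrix (Fin N) (Fin N) ℝ := fun k => (2 : ℝ) • (B k - G) + (2 * μ * t) • 1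
  have hG : G.IsHermitian := Matrix.ext fun i j => hGsym j i
  have hM : ∀ k, (M k).PosDef := fun k =>
    ((hB k ▸ posDef_diagonal_sub_of_sum_lt hG hGnonneg (hA k)).smul two_pos).add
      (PosDef.one.smul (by positivity))
  have hMbar : ∑ k, p k • M k
      = (2 : ℝ) • Bbar - (2 : ℝ) • G + (2 * μ * t) • (1 : Matrix (Fin N) (Fin N) ℝ) := by
    simp only [M, hBbar, smul_add, smul_sub, sum_add_distrib, sum_sub_distrib, ← sum_smul, hps,
      one_smul, smul_sum]
    simp only [smul_comm (p _) (2 : ℝ)]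
  have hJensen := dotProduct_inv_mulVec_sum_smul_le hM hp hps ones
  rw [hMbar] at hJensen
  have hK : μ * t / N * (μ * s + abar - c) ≤ 0 :=
    mul_nonpos_of_nonneg_of_nonpos (by positivity) (by linarith)
  have hmean (C K : ℝ) (q : Fin m → ℝ) : ∑ k, p k * (C - K * q k) = C - K * ∑ k, p k * q k := by
    simp only [mul_sub, sum_sub_distrib, ← sum_mul, hps, one_mul, mul_left_comm _ K, ← mul_sum]
  rw [ge_iff_le, hmean]
  exact sub_le_sub_left (mul_le_mul_of_nonpos_left hJensen hK) _

/-- Theorem 2 (finite-expectation form): if `c ≥ ā + μs`, the expected average optimal reward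
over finitely many scenarios for `b` is bounded below by the expression obtained by replacing
`B` with its expectation `B̄`. -/
theorem stmt14 (N m : ℕ) (hN : 1 ≤ N) (hm : 1 ≤ m)
    (abar c μ s t : ℝ) (hμ : 0 < μ) (hs : 0 < s) (ht : 0 < t)
    (G : Matrix (Fin N) (Fin N) ℝ)
    (hGsym : ∀ i j, G i j = G j i)
    (hGnonneg : ∀ i j, 0 ≤ G i j)
    (hGdiag : ∀ i, G i i = 0)
    (b : Fin m → Fin N → ℝ) (hb : ∀ k i, 0 < b k i)
    (hA : ∀ k i, ∑ j, G i j < 2 * b k i)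
    (p : Fin m → ℝ) (hp : ∀ k, 0 ≤ p k) (hps : ∑ k, p k = 1)
    (B : Fin m → Matrix (Fin N) (Fin N) ℝ)
    (hB : ∀ k, B k = Matrix.diagonal (fun i => 2 * b k i))
    (Bbar : Matrix (Fin N) (Fin N) ℝ) (hBbar : Bbar = ∑ k, p k • B k)
    (ones : Fin N → ℝ) (hones : ones = fun _ => 1)
    (hc : abar + μ * s ≤ c) :
    (∑ k, p k * ((c - abar) / 2 + μ * s / 2
        - (μ * t / (N : ℝ)) * (μ * s + abar - c) *
          (ones ⬝ᵥ
            (((2 : ℝ) • (B k - G) + (2 * μ * t) • (1 : Matrix (Fin N) (Fin N) ℝ))⁻¹ *ᵥ ones))))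
      ≥ (c - abar) / 2 + μ * s / 2
        - (μ * t / (N : ℝ)) * (μ * s + abar - c) *
          (ones ⬝ᵥ
            (((2 : ℝ) • Bbar - (2 : ℝ) • G + (2 * μ * t) • (1 : Matrix (Fin N) (Fin N) ℝ))⁻¹ *ᵥ ones)) :=
  stmt14_general N m abar c μ s t hμ ht G hGsym hGnonneg b hA p hp hps B hB Bbar hBbar ones hc
end
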